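/- Let (X, Σ, μ) be a σ-finite measure space, let q : X → ℝ be measurable with q(x) > 0 for μ-almost every x, and let p : ℝ → X → ℝ and f : ℝ → X → ℝ with x ↦ p(θ, x)·f(θ, x) measurable for each θ. Assume: (i) for each θ, x ↦ p(θ, x)·f(θ, x) is μ-integrable; (ii) for μ-almost every x, the map θ ↦ p(θ, x)·f(θ, x) is differentiable; and (iii) its θ-derivative is locally dominated with respect to μ. Then L(θ) = ∫ f(θ, x)·p(θ, x) dμ(x) is differentiable at every θ, with L'(θ) = ∫ ∂_θ( (p(θ, x)/q(x))·f(θ, x) ) · q(x) dμ(x). That is, the importance-sampling derivative estimator, which samples x from the proposal with density q and returns the θ-derivative of the importance weight times the loss, is unbiased. -/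

import Mathlib

/-! The hypothesis bounds the `θ`-derivative of `p θ x * f θ x` by `m x` only off a null set of
`x` that may depend on `θ`, whereas differentiation under the integral sign needs one null set
for all `θ` near `θ₀`. After changing the integrand on a null set so that it is differentiable
in `θ` for every `x`, its derivative is a pointwise limit of difference quotients, hence jointly
measurable, and Fubini exchanges the quantifiers: for a.e. `x`, the bound holds for a.e. `θ`
near `θ₀`, which by the fundamental theorem of calculus makes `θ ↦ p θ x * f θ x` Lipschitz
with constant `m x` there. Finally `(p θ x / q x) * f θ x * q x` has the same `θ`-derivative as
`p θ x * f θ x` wherever `q x > 0`. -/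

open MeasureTheory

/-- A function `g : ℝ × X → ℝ` is locally dominated with respect to a measure `ν` on
`X` if for every `θ₀` there exist `ε > 0` and a `ν`-integrable nonnegative function
`m` such that `|g θ x| ≤ m x` for all `θ` with `|θ − θ₀| < ε` and `ν`-a.e. `x`. -/
def LocallyDominated {X : Type*} [MeasurableSpace X] (ν : Measure X)
    (g : ℝ → X → ℝ) : Prop :=
  ∀ θ₀ : ℝ, ∃ ε > (0 : ℝ), ∃ m : X → ℝ, Integrable m ν ∧ (∀ x, 0 ≤ m x) ∧
    ∀ θ : ℝ, |θ - θ₀| < ε → ∀ᵐ x ∂ν, |g θ x| ≤ m x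

open Filter Set Topology
open scoped NNReal Interval

theorem lipschitzOnWith_of_ae_norm_deriv_le {E : Type*} [NormedAddCommGroup E] [NormedSpace ℝ E]
    [CompleteSpace E] {g : ℝ → E} {s : Set ℝ} [s.OrdConnected] {K : ℝ≥0}
    (hg : ∀ t ∈ s, DifferentiableAt ℝ g t) (hK : ∀ᵐ t ∂volume.restrict s, ‖deriv g t‖ ≤ K) :
    LipschitzOnWith K g s := by
  refine LipschitzOnWith.of_dist_le_mul fun a ha b hb => ?_
  have hab : uIcc a b ⊆ s := OrdConnected.uIcc_subset ‹_› ha hb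
  have hbound : ∀ᵐ t ∂volume.restrict (Ι a b), ‖deriv g t‖ ≤ K :=
    ae_restrict_of_ae_restrict_of_subset (uIoc_subset_uIcc.trans hab) hK
  have hint : IntervalIntegrable (deriv g) volume a b :=
    intervalIntegrable_iff.2 <| Measure.integrableOn_of_bounded measure_Ioc_lt_top.ne
      (aestronglyMeasurable_deriv g _) hbound
  have hftc : ∫ t in a..b, deriv g t = g b - g a :=
    intervalIntegral.integral_eq_sub_of_hasDerivAt
      (fun t ht => (hg t (hab ht)).hasDerivAt) hint
  calc dist (g a) (g b) = ‖∫ t in a..b, deriv g t‖ := by rw [hftc, dist_comm, dist_eq_norm]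
    _ ≤ K * |b - a| := intervalIntegral.norm_integral_le_of_norm_le_const_ae
          ((ae_restrict_iff' measurableSet_uIoc).1 hbound)
    _ = K * dist a b := by rw [Real.dist_eq, abs_sub_comm]

section

variable {X : Type*} [MeasurableSpace X] {μ : Measure X}

theorem measurable_uncurry_deriv {F : ℝ → X → ℝ} (hmeas : ∀ θ, Measurable (F θ))
    (hdiff : ∀ x θ, DifferentiableAt ℝ (F · x) θ) :
    Measurable (Function.uncurry fun θ x => deriv (F · x) θ) := by
  have hF : Measurable (Function.uncurry F) :=
    measurable_uncurry_of_continuous_of_measurable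
      (fun x => continuous_iff_continuousAt.2 fun θ => (hdiff x θ).continuousAt) hmeas
  have hstep : Tendsto (fun n : ℕ => 1 / ((n : ℝ) + 1)) atTop (𝓝[≠] 0) :=
    tendsto_nhdsWithin_iff.2 ⟨tendsto_one_div_add_atTop_nhds_zero_nat,
      Eventually.of_forall fun n => mem_compl_singleton_iff.2 (by positivity)⟩
  refine measurable_of_tendsto_metrizable
    (f := fun (n : ℕ) (z : ℝ × X) =>
      (1 / ((n : ℝ) + 1))⁻¹ • (F (z.1 + 1 / ((n : ℝ) + 1)) z.2 - F z.1 z.2))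
    (fun n => ?_)
    (tendsto_pi_nhds.2 fun z => (hdiff z.2 z.1).hasDerivAt.tendsto_slope_zero.comp hstep)
  have hshift : Measurable fun z : ℝ × X => F (z.1 + 1 / ((n : ℝ) + 1)) z.2 :=
    hF.comp ((measurable_fst.add_const _).prodMk measurable_snd)
  exact (hshift.sub hF).const_smul ((1 / ((n : ℝ) + 1))⁻¹)

theorem ae_lipschitzOnWith_of_forall_ae_abs_deriv_le [SFinite μ] {F : ℝ → X → ℝ}
    {m : X → ℝ} {s : Set ℝ} [s.OrdConnected] (hs : MeasurableSet s)
    (hmeas : ∀ θ, Measurable (F θ)) (hdiff : ∀ x θ, DifferentiableAt ℝ (F · x) θ)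
    (hm : AEMeasurable m μ) (hbound : ∀ θ ∈ s, ∀ᵐ x ∂μ, |deriv (F · x) θ| ≤ m x) :
    ∀ᵐ x ∂μ, LipschitzOnWith (Real.nnabs (m x)) (F · x) s := by
  obtain ⟨m', hm'_meas, hmm'⟩ := hm
  have hD := measurable_uncurry_deriv hmeas hdiff
  have hset : MeasurableSet {z : X × ℝ | |deriv (F · z.1) z.2| ≤ m' z.1} :=
    measurableSet_le (hD.comp measurable_swap).abs (hm'_meas.comp measurable_fst)
  have hswap : ∀ᵐ x ∂μ, ∀ᵐ θ ∂volume.restrict s, |deriv (F · x) θ| ≤ m' x := by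
    refine (Measure.ae_ae_comm hset).2 (ae_restrict_of_forall_mem hs fun θ hθ => ?_)
    filter_upwards [hbound θ hθ, hmm'] with x hx hmx
    rwa [← hmx]
  filter_upwards [hswap, hmm'] with x hx hmx
  refine lipschitzOnWith_of_ae_norm_deriv_le (fun θ _ => hdiff x θ) ?_
  filter_upwards [hx] with θ hθ
  rw [Real.norm_eq_abs, Real.coe_nnabs, hmx]
  exact hθ.trans (le_abs_self _)

theorem exists_measurable_differentiable_ae_eq {F : ℝ → X → ℝ}
    (hmeas : ∀ θ, Measurable (F θ)) (hdiff : ∀ᵐ x ∂μ, ∀ θ, DifferentiableAt ℝ (F · x) θ) :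
    ∃ G : ℝ → X → ℝ, (∀ θ, Measurable (G θ)) ∧ (∀ x θ, DifferentiableAt ℝ (G · x) θ) ∧
      ∀ᵐ x ∂μ, (G · x) = (F · x) := by
  set T := toMeasurable μ {x | ¬ ∀ θ, DifferentiableAt ℝ (F · x) θ}
  have hT : MeasurableSet T := measurableSet_toMeasurable _ _
  refine ⟨fun θ => Tᶜ.indicator (F θ), fun θ => (hmeas θ).indicator hT.compl,
    fun x θ => ?_, ?_⟩
  · by_cases hx : x ∈ T
    · simp only [indicator_of_notMem (notMem_compl_iff.2 hx)]
      exact differentiableAt_const (0 : ℝ)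
    · have hFx : ∀ θ, DifferentiableAt ℝ (F · x) θ := by
        by_contra h
        exact hx (subset_toMeasurable _ _ h)
      simpa only [indicator_of_mem (mem_compl hx)] using hFx θ
  · have hTnull : ∀ᵐ x ∂μ, x ∉ T :=
      measure_eq_zero_iff_ae_notMem.1 (by rw [measure_toMeasurable]; exact hdiff)
    filter_upwards [hTnull] with x hx
    simp only [indicator_of_mem (mem_compl hx)]

theorem hasDerivAt_integral_of_locallyDominated [SFinite μ] {F : ℝ → X → ℝ} {θ₀ : ℝ}
    (hmeas : ∀ θ, Measurable (F θ)) (hint : Integrable (F θ₀) μ)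
    (hdiff : ∀ᵐ x ∂μ, ∀ θ, DifferentiableAt ℝ (F · x) θ)
    (hdom : LocallyDominated μ fun θ x => deriv (F · x) θ) :
    HasDerivAt (fun θ => ∫ x, F θ x ∂μ) (∫ x, deriv (F · x) θ₀ ∂μ) θ₀ := by
  obtain ⟨G, hG_meas, hG_diff, hGF⟩ := exists_measurable_differentiable_ae_eq hmeas hdiff
  have hGF_apply (θ : ℝ) : G θ =ᵐ[μ] F θ := hGF.mono fun x hx => congrFun hx θ
  have hGF_deriv (θ : ℝ) : (fun x => deriv (G · x) θ) =ᵐ[μ] fun x => deriv (F · x) θ :=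
    hGF.mono fun x hx => congrArg (deriv · θ) hx
  obtain ⟨ε, hε, m, hm_int, -, hm_bound⟩ := hdom θ₀
  have hG_bound : ∀ θ ∈ Ioo (θ₀ - ε) (θ₀ + ε), ∀ᵐ x ∂μ, |deriv (G · x) θ| ≤ m x := by
    intro θ hθ
    have hθ' : |θ - θ₀| < ε := abs_sub_lt_iff.2 ⟨by linarith [hθ.2], by linarith [hθ.1]⟩
    filter_upwards [hm_bound θ hθ', hGF_deriv θ] with x hx hGx
    rwa [hGx]
  have hG_lip := ae_lipschitzOnWith_of_forall_ae_abs_deriv_le measurableSet_Ioo hG_meas hG_diff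
    hm_int.aemeasurable hG_bound
  have hG := (hasDerivAt_integral_of_dominated_loc_of_lip
    (Ioo_mem_nhds (by linarith) (by linarith))
    (Eventually.of_forall fun θ => (hG_meas θ).aestronglyMeasurable)
    (hint.congr (hGF_apply θ₀).symm)
    ((measurable_uncurry_deriv hG_meas hG_diff).comp measurable_prodMk_left).aestronglyMeasurable
    hG_lip hm_int (Eventually.of_forall fun x => (hG_diff x θ₀).hasDerivAt)).2
  rw [funext fun θ => integral_congr_ae (hGF_apply θ).symm, integral_congr_ae (hGF_deriv θ₀).symm]
  exact hG

end

theorem importance_sampling_derivative_unbiased_general {X : Type*} [MeasurableSpace X]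
    (μ : Measure X) [SigmaFinite μ]
    (q : X → ℝ) (hq_pos : ∀ᵐ x ∂μ, 0 < q x)
    (p f : ℝ → X → ℝ)
    (hmeas : ∀ θ : ℝ, Measurable (fun x => p θ x * f θ x))
    (hint : ∀ θ : ℝ, Integrable (fun x => p θ x * f θ x) μ)
    (hderiv : ∀ᵐ x ∂μ, ∀ θ : ℝ, DifferentiableAt ℝ (fun θ' => p θ' x * f θ' x) θ)
    (hdom : LocallyDominated μ (fun θ x => deriv (fun θ' => p θ' x * f θ' x) θ)) :
    ∀ θ : ℝ,
      HasDerivAt (fun θ' => ∫ x, f θ' x * p θ' x ∂μ)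
        (∫ x, deriv (fun θ' => (p θ' x / q x) * f θ' x) θ * q x ∂μ) θ := by
  intro θ
  convert hasDerivAt_integral_of_locallyDominated hmeas (hint θ) hderiv hdom using 1
  · simp only [mul_comm (f _ _)]
  · refine integral_congr_ae ?_
    filter_upwards [hq_pos] with x hqx
    simp only [div_mul_eq_mul_div, deriv_div_const]
    exact mul_div_cancel_right₀ _ hqx.ne'

/-- **Unbiasedness of the importance-sampling derivative estimator.**
Let `q` be a measurable a.e.-positive proposal density and `p θ ·` the target
density on a σ-finite measure space `(X, μ)`.  If `x ↦ p θ x · f θ x` is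
measurable and integrable for each `θ`, differentiable in `θ` for a.e. `x`, with
locally dominated `θ`-derivative, then `L θ = ∫ f θ x · p θ x dμ` is
differentiable with `L'(θ) = ∫ ∂_θ((p θ x / q x) · f θ x) · q x dμ`:
sampling from the proposal `q` and returning the `θ`-derivative of the importance
weight times the loss is unbiased. -/
theorem importance_sampling_derivative_unbiased {X : Type*} [MeasurableSpace X]
    (μ : Measure X) [SigmaFinite μ]
    (q : X → ℝ) (hq_meas : Measurable q) (hq_pos : ∀ᵐ x ∂μ, 0 < q x)
    (p f : ℝ → X → ℝ)
    (hmeas : ∀ θ : ℝ, Measurable (fun x => p θ x * f θ x))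
    (hint : ∀ θ : ℝ, Integrable (fun x => p θ x * f θ x) μ)
    (hderiv : ∀ᵐ x ∂μ, ∀ θ : ℝ, DifferentiableAt ℝ (fun θ' => p θ' x * f θ' x) θ)
    (hdom : LocallyDominated μ (fun θ x => deriv (fun θ' => p θ' x * f θ' x) θ)) :
    ∀ θ : ℝ,
      HasDerivAt (fun θ' => ∫ x, f θ' x * p θ' x ∂μ)
        (∫ x, deriv (fun θ' => (p θ' x / q x) * f θ' x) θ * q x ∂μ) θ :=
  importance_sampling_derivative_unbiased_general μ q hq_pos p f hmeas hint hderiv hdom
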